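/- For each x ∈ X and each k ∈ ℕ there exists a unique partition of ℤ into consecutive intervals of length 2^k — i.e., a unique offset r ∈ {0,…,2^k−1}, the intervals being [r + m·2^k, r + (m+1)·2^k) for m ∈ ℤ — such that the subword of x on each interval of the partition is either u_k or ū_k. -/

import Mathlib

/-- The substitution σ on symbols: σ(0) = 01, σ(1) = 10 (with 0 ↔ `false`, 1 ↔ `true`). -/
def sigmaSub (b : Bool) : List Bool := [b, !b]

/-- The substitution σ extended to words by concatenation. -/
def subst (w : List Bool) : List Bool := w.flatMap sigmaSub

/-- The flip of a binary word: exchange 0 and 1 in every position. -/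
def flipWord (w : List Bool) : List Bool := w.map (fun b => !b)

/-- u_k = σ^k(0). -/
def uWord : ℕ → List Bool
  | 0 => [false]
  | k + 1 => subst (uWord k)

/-- The Morse sequence: its first 2^k symbols form the word u_k for every k. -/
def morse (n : ℕ) : Bool := (uWord (n + 1)).getD n false

/-- The subword of `x` on the interval `[p, p + w.length)` is the word `w`. -/
def readsWord (x : ℤ → Bool) (p : ℤ) (w : List Bool) : Prop :=
  ∀ j : ℕ, j < w.length → x (p + j) = w.getD j false

/-- The Morse minimal set X: bi-infinite sequences all of whose finite subwords
occur in the Morse sequence. -/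
def morseShiftX : Set (ℤ → Bool) :=
  {x | ∀ (a : ℤ) (l : ℕ), ∃ s : ℕ, ∀ j : ℕ, j < l → x (a + j) = morse (s + j)}

/-- The left shift T. -/
def shiftT (x : ℤ → Bool) : ℤ → Bool := fun i => x (i + 1)

/-!
Every `x ∈ X` contains two equal adjacent symbols (the Morse sequence has no factor `01010`),
and in the Morse sequence such doubles only start at odd positions, because `m(2n) m(2n+1)` is
`01` or `10`. Hence all doubles of `x` have the same parity, so `x` splits in exactly one way into
pairs `01`, `10`. The first symbols of these pairs form a sequence `y` that again lies in `X`
(as `m(2n) = m(n)` and `m(2n+1) = ¬m(n)`), and `x` reads `σ(w)` at `t + 2p` iff `y` reads `w`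
at `p`. By induction on `k`, the admissible offsets for `x` form one residue class mod `2^k`.
-/

lemma subst_cons (b : Bool) (w : List Bool) : subst (b :: w) = b :: (!b) :: subst w := rfl

lemma subst_append (v w : List Bool) : subst (v ++ w) = subst v ++ subst w :=
  List.flatMap_append

lemma subst_length (w : List Bool) : (subst w).length = 2 * w.length := by
  induction w with
  | nil => rfl
  | cons b w ih => simp only [subst_cons, List.length_cons, ih]; ring

lemma subst_getD_two_mul (w : List Bool) {q : ℕ} (hq : q < w.length) :
    (subst w).getD (2 * q) false = w.getD q false := by
  induction w generalizing q with
  | nil => simp at hq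
  | cons b w ih =>
    cases q with
    | zero => rfl
    | succ q => simpa [subst_cons, Nat.mul_succ] using ih (by simpa using hq)

lemma subst_getD_two_mul_add_one (w : List Bool) {q : ℕ} (hq : q < w.length) :
    (subst w).getD (2 * q + 1) false = !w.getD q false := by
  induction w generalizing q with
  | nil => simp at hq
  | cons b w ih =>
    cases q with
    | zero => rfl
    | succ q => simpa [subst_cons, Nat.mul_succ] using ih (by simpa using hq)

lemma flipWord_length (w : List Bool) : (flipWord w).length = w.length :=
  List.length_map _

lemma flipWord_getD (w : List Bool) {j : ℕ} (hj : j < w.length) :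
    (flipWord w).getD j false = !w.getD j false := by
  simp [flipWord, List.getElem?_eq_getElem hj]

lemma subst_flipWord (w : List Bool) : subst (flipWord w) = flipWord (subst w) := by
  induction w with
  | nil => rfl
  | cons b w ih => simpa [flipWord, subst_cons] using ih

lemma uWord_length (k : ℕ) : (uWord k).length = 2 ^ k := by
  induction k with
  | zero => rfl
  | succ k ih => rw [uWord, subst_length, ih, pow_succ']

lemma uWord_succ_eq_append (k : ℕ) : uWord (k + 1) = uWord k ++ flipWord (uWord k) := by
  induction k with
  | zero => rfl
  | succ k ih =>
    show subst (uWord (k + 1)) = subst (uWord k) ++ flipWord (subst (uWord k))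
    rw [ih, subst_append, subst_flipWord]

lemma uWord_getD_of_le {k k' : ℕ} (hk : k ≤ k') {n : ℕ} (hn : n < 2 ^ k) :
    (uWord k').getD n false = (uWord k).getD n false := by
  induction k', hk using Nat.le_induction with
  | base => rfl
  | succ k' hk ih =>
    have hn' : n < (uWord k').length :=
      (uWord_length k').symm ▸ hn.trans_le (Nat.pow_le_pow_right two_pos hk)
    rw [uWord_succ_eq_append, List.getD_append _ _ _ _ hn', ih]

lemma morse_eq_uWord_getD {k n : ℕ} (hn : n < 2 ^ k) : morse n = (uWord k).getD n false := by
  have hn' : n < 2 ^ (n + 1) := (Nat.lt_two_pow_self).trans (Nat.pow_lt_pow_succ one_lt_two)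
  rcases le_total k (n + 1) with hk | hk
  · exact uWord_getD_of_le hk hn
  · exact (uWord_getD_of_le hk hn').symm

lemma morse_two_mul (n : ℕ) : morse (2 * n) = morse n := by
  have hn : n < 2 ^ n := Nat.lt_two_pow_self
  rw [morse_eq_uWord_getD (k := n + 1) (by rw [pow_succ']; omega), morse_eq_uWord_getD hn]
  exact subst_getD_two_mul _ (by rwa [uWord_length])

lemma morse_two_mul_add_one (n : ℕ) : morse (2 * n + 1) = !morse n := by
  have hn : n < 2 ^ n := Nat.lt_two_pow_self
  rw [morse_eq_uWord_getD (k := n + 1) (by rw [pow_succ']; omega), morse_eq_uWord_getD hn]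
  exact subst_getD_two_mul_add_one _ (by rwa [uWord_length])

lemma morse_two_pow_add {k j : ℕ} (hj : j < 2 ^ k) : morse (2 ^ k + j) = !morse j := by
  rw [morse_eq_uWord_getD (k := k + 1) (by rw [pow_succ]; omega), morse_eq_uWord_getD hj,
    uWord_succ_eq_append, List.getD_append_right _ _ _ _ (by rw [uWord_length]; omega),
    uWord_length, Nat.add_sub_cancel_left, flipWord_getD _ (by rwa [uWord_length])]

lemma odd_of_morse_eq_morse_succ {i : ℕ} (h : morse i = morse (i + 1)) : Odd i := by
  obtain ⟨n, rfl | rfl⟩ := Nat.even_or_odd' i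
  · simp [morse_two_mul, morse_two_mul_add_one] at h
  · exact odd_two_mul_add_one n

lemma exists_morse_eq_morse_succ (s : ℕ) :
    ∃ i, s ≤ i ∧ i ≤ s + 3 ∧ morse i = morse (i + 1) := by
  set q := s / 2
  have hnot : ¬ (morse q = morse (q + 1) ∧ morse (q + 1) = morse (q + 2)) :=
    fun ⟨h₁, h₂⟩ =>
      Nat.odd_add_one.mp (odd_of_morse_eq_morse_succ h₂) (odd_of_morse_eq_morse_succ h₁)
  -- `morse (2q+1) = morse (2q+2)` unless `morse q = morse (q+1)`, and similarly one step further
  by_cases h : morse q = morse (q + 1)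
  · refine ⟨2 * (q + 1) + 1, by omega, by omega, ?_⟩
    rw [morse_two_mul_add_one, show 2 * (q + 1) + 1 + 1 = 2 * (q + 2) by ring, morse_two_mul]
    exact Bool.not_eq_eq_eq_not.mpr (Bool.eq_not_iff.mpr fun h' => hnot ⟨h, h'⟩)
  · refine ⟨2 * q + 1, by omega, by omega, ?_⟩
    rw [morse_two_mul_add_one, show 2 * q + 1 + 1 = 2 * (q + 1) by ring, morse_two_mul]
    exact Bool.not_eq_eq_eq_not.mpr (Bool.eq_not_iff.mpr h)

def decimate (x : ℤ → Bool) (t : ℤ) : ℤ → Bool := fun n => x (t + 2 * n)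

def IsPairing (x : ℤ → Bool) (t : ℤ) : Prop := ∀ m : ℤ, x (t + 2 * m + 1) = !x (t + 2 * m)

def ReadsBlock (x : ℤ → Bool) (k : ℕ) (p : ℤ) : Prop :=
  readsWord x p (uWord k) ∨ readsWord x p (flipWord (uWord k))

def IsBlockOffset (x : ℤ → Bool) (k : ℕ) (r : ℤ) : Prop :=
  ∀ m : ℤ, ReadsBlock x k (r + m * 2 ^ k)

section MorseShift

variable {x : ℤ → Bool}

lemma readsWord_subst_iff (t q : ℤ) (w : List Bool) :
    readsWord x (t + 2 * q) (subst w) ↔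
      (∀ j < w.length, x (t + 2 * (q + j) + 1) = !x (t + 2 * (q + j))) ∧
        readsWord (decimate x t) q w := by
  simp only [readsWord, subst_length, decimate]
  constructor
  · intro h
    have heven : ∀ j < w.length, x (t + 2 * (q + j)) = w.getD j false := fun j hj => by
      have h₀ := h (2 * j) (by omega)
      rw [subst_getD_two_mul w hj] at h₀
      simpa [mul_add, add_assoc] using h₀
    refine ⟨fun j hj => ?_, heven⟩
    have hodd := h (2 * j + 1) (by omega)
    rw [subst_getD_two_mul_add_one w hj, ← heven j hj] at hodd
    simpa [mul_add, add_assoc] using hodd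
  · rintro ⟨hpair, hw⟩ j hj
    obtain ⟨i, rfl | rfl⟩ := Nat.even_or_odd' j
    · rw [subst_getD_two_mul w (by omega), ← hw i (by omega)]
      push_cast
      ring_nf
    · rw [subst_getD_two_mul_add_one w (by omega), ← hw i (by omega), ← hpair i (by omega)]
      push_cast
      ring_nf

lemma readsBlock_zero (p : ℤ) : ReadsBlock x 0 p := by
  cases h : x p
  · exact Or.inl fun j hj => by simp_all [uWord]
  · exact Or.inr fun j hj => by simp_all [uWord, flipWord]

lemma readsBlock_succ_iff (k : ℕ) (t q : ℤ) :
    ReadsBlock x (k + 1) (t + 2 * q) ↔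
      (∀ j : ℕ, j < 2 ^ k → x (t + 2 * (q + j) + 1) = !x (t + 2 * (q + j))) ∧
        ReadsBlock (decimate x t) k q := by
  rw [ReadsBlock, ReadsBlock, uWord, ← subst_flipWord, readsWord_subst_iff, readsWord_subst_iff,
    flipWord_length, uWord_length, and_or_left]

lemma IsBlockOffset.isPairing {k : ℕ} {r : ℤ} (h : IsBlockOffset x (k + 1) r) :
    IsPairing x r := by
  intro m
  have hN : (0 : ℤ) < 2 ^ k := by positivity
  set j := (m % 2 ^ k).toNat
  have hj : (j : ℤ) = m % 2 ^ k := Int.toNat_of_nonneg (Int.emod_nonneg _ hN.ne')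
  have hm : m / 2 ^ k * 2 ^ k + j = m := by rw [hj]; exact Int.ediv_mul_add_emod m _
  have hblock := h (m / 2 ^ k)
  rw [pow_succ', ← mul_assoc, mul_comm _ (2 : ℤ), mul_assoc, readsBlock_succ_iff] at hblock
  have hjN : j < 2 ^ k := by zify; rw [hj]; exact Int.emod_lt_of_pos m hN
  simpa [hm] using hblock.1 j hjN

lemma isBlockOffset_succ_iff {t : ℤ} (ht : IsPairing x t) (k : ℕ) (p : ℤ) :
    IsBlockOffset x (k + 1) (t + 2 * p) ↔ IsBlockOffset (decimate x t) k p := by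
  have hpos : ∀ m : ℤ, t + 2 * p + m * 2 ^ (k + 1) = t + 2 * (p + m * 2 ^ k) := fun m => by ring
  simp only [IsBlockOffset, hpos, readsBlock_succ_iff]
  exact forall_congr' fun m => and_iff_right fun j _ => ht _

lemma exists_eq_succ_of_mem_morseShiftX (hx : x ∈ morseShiftX) : ∃ i, x i = x (i + 1) := by
  obtain ⟨s, hs⟩ := hx 0 5
  obtain ⟨i, hsi, his, hi⟩ := exists_morse_eq_morse_succ s
  refine ⟨(i - s : ℕ), ?_⟩
  have h₀ := hs (i - s) (by omega)
  have h₁ := hs (i - s + 1) (by omega)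
  rw [Nat.add_sub_cancel' hsi] at h₀
  rw [← add_assoc, Nat.add_sub_cancel' hsi] at h₁
  push_cast at h₀ h₁
  rw [zero_add] at h₀ h₁
  rw [h₀, h₁, hi]

lemma modEq_two_of_eq_succ (hx : x ∈ morseShiftX) {i i' : ℤ} (h : x i = x (i + 1))
    (h' : x i' = x (i' + 1)) : i ≡ i' [ZMOD 2] := by
  wlog hle : i ≤ i' generalizing i i'
  · exact (this h' h (by omega)).symm
  obtain ⟨d, rfl⟩ : ∃ d : ℕ, i' = i + d := ⟨(i' - i).toNat, by omega⟩
  obtain ⟨s, hs⟩ := hx i (d + 2)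
  have h₀ := hs 0 (by omega)
  have h₁ := hs 1 (by omega)
  have h₂ := hs d (by omega)
  have h₃ := hs (d + 1) (by omega)
  push_cast at h₀ h₁ h₂ h₃
  rw [add_zero, add_zero] at h₀
  rw [← add_assoc, ← add_assoc] at h₃
  obtain ⟨a, ha⟩ := odd_of_morse_eq_morse_succ (h₀ ▸ h₁ ▸ h)
  obtain ⟨b, hb⟩ := odd_of_morse_eq_morse_succ (h₂ ▸ h₃ ▸ h')
  unfold Int.ModEq
  omega

lemma exists_isPairing_iff (hx : x ∈ morseShiftX) :
    ∃ t, ∀ t', IsPairing x t' ↔ t' ≡ t [ZMOD 2] := by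
  obtain ⟨i, hi⟩ := exists_eq_succ_of_mem_morseShiftX hx
  refine ⟨i + 1, fun t' => ⟨fun ht => ?_, fun ht m => ?_⟩⟩
  · by_contra hne
    obtain ⟨m, rfl⟩ : ∃ m, i = t' + 2 * m :=
      ⟨(i - t') / 2, by unfold Int.ModEq at hne; omega⟩
    simp [ht m] at hi
  · by_contra hne
    have hd : x (t' + 2 * m) = x (t' + 2 * m + 1) := by simpa [Bool.eq_not_iff, eq_comm] using hne
    have := modEq_two_of_eq_succ hx hi hd
    unfold Int.ModEq at ht this
    omega

lemma decimate_mem_morseShiftX (hx : x ∈ morseShiftX) (t : ℤ) :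
    decimate x t ∈ morseShiftX := by
  intro a l
  obtain ⟨s, hs⟩ := hx (t + 2 * a) (2 * l)
  have hs₂ : ∀ j < l, decimate x t (a + j) = morse (s + 2 * j) := fun j hj => by
    simpa [decimate, mul_add, add_assoc] using hs (2 * j) (by omega)
  obtain ⟨p, rfl | rfl⟩ := Nat.even_or_odd' s
  · exact ⟨p, fun j hj => by rw [hs₂ j hj, ← mul_add, morse_two_mul]⟩
  · -- the flip of a factor of `morse` is again one: `!morse n = morse (2 ^ N + n)` for `n < 2 ^ N`
    refine ⟨2 ^ (p + l) + p, fun j hj => ?_⟩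
    have hlt : p + j < 2 ^ (p + l) := (Nat.add_lt_add_left hj p).trans Nat.lt_two_pow_self
    rw [hs₂ j hj, add_assoc (2 ^ _), morse_two_pow_add hlt,
      show 2 * p + 1 + 2 * j = 2 * (p + j) + 1 by ring, morse_two_mul_add_one]

theorem exists_isBlockOffset_iff_modEq (hx : x ∈ morseShiftX) (k : ℕ) :
    ∃ r, ∀ r', IsBlockOffset x k r' ↔ r' ≡ r [ZMOD 2 ^ k] := by
  induction k generalizing x with
  | zero => exact ⟨0, fun r' => iff_of_true (fun m => readsBlock_zero _) Int.modEq_one⟩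
  | succ k ih =>
    obtain ⟨t, ht⟩ := exists_isPairing_iff hx
    obtain ⟨r, hr⟩ := ih (decimate_mem_morseShiftX hx t)
    refine ⟨t + 2 * r, fun r' => ?_⟩
    by_cases hr' : r' ≡ t [ZMOD 2]
    · obtain ⟨p, rfl⟩ : ∃ p, r' = t + 2 * p :=
        ⟨(r' - t) / 2, by unfold Int.ModEq at hr'; omega⟩
      rw [isBlockOffset_succ_iff ((ht t).2 rfl), hr, Int.modEq_iff_dvd, Int.modEq_iff_dvd,
        show t + 2 * r - (t + 2 * p) = 2 * (r - p) by ring, pow_succ',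
        mul_dvd_mul_iff_left two_ne_zero]
    · refine iff_of_false (fun h => hr' ((ht r').1 h.isPairing)) fun h => hr' ?_
      have h₂ := h.of_dvd (dvd_pow_self 2 k.succ_ne_zero)
      unfold Int.ModEq at h₂ ⊢
      omega

end MorseShift

/-- For each x ∈ X and k ∈ ℕ there is a unique offset r ∈ {0,…,2^k−1} such that on
each interval [r + m·2^k, r + (m+1)·2^k) the subword of x is u_k or ū_k. -/
theorem morse_unique_partition :
    ∀ x ∈ morseShiftX, ∀ k : ℕ,
      ∃! r : ℕ, r < 2 ^ k ∧ ∀ m : ℤ,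
        readsWord x ((r : ℤ) + m * 2 ^ k) (uWord k) ∨
        readsWord x ((r : ℤ) + m * 2 ^ k) (flipWord (uWord k)) := by
  intro x hx k
  obtain ⟨r, hr⟩ := exists_isBlockOffset_iff_modEq hx k
  have hN : (0 : ℤ) < 2 ^ k := by positivity
  have hr₀ : ((r % 2 ^ k).toNat : ℤ) = r % 2 ^ k :=
    Int.toNat_of_nonneg (Int.emod_nonneg _ hN.ne')
  refine ⟨(r % 2 ^ k).toNat, ⟨?_, (hr _).2 ?_⟩, fun r' ⟨hr'N, hr'⟩ => ?_⟩
  · zify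
    rw [hr₀]
    exact Int.emod_lt_of_pos r hN
  · rw [hr₀]
    exact Int.mod_modEq r _
  · have hmod : (r' : ℤ) % 2 ^ k = r % 2 ^ k := (hr r').1 hr'
    zify at hr'N
    rw [Int.emod_eq_of_lt (by positivity) hr'N] at hmod
    omega
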